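/- arXiv:2305.17615 — 2 statements merged into one kernel-verified Lean document; each statement's English description precedes it below -/
import Mathlib

section
/- Let P be an N×N orthogonal projection matrix with diagonal entries D_i, suppose there exists m > 0 with D_i ≤ 1 − m for all i, and let ω = (L+1)/N for a fixed natural number L. Then as N → ∞, Σ_{i=1}^N ω/(1 − D_i + ω) − (L+1) → 0 (where the projection has fixed rank K₁ ≤ K as N grows). -/
open Matrix Filter

lemma trace_eq_rank_aux {N : ℕ} (P : Matrix (Fin N) (Fin N) ℝ)
    (hidem : P * P = P) : P.trace = (P.rank : ℝ) := by
  set f := P.mulVecLin with hf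
  have hff : ∀ x, f (f x) = f x := by
    intro x
    have : f ∘ₗ f = f := by rw [hf, ← Matrix.mulVecLin_mul, hidem]
    exact congrFun (congrArg DFunLike.coe this) x
  have hproj : LinearMap.IsProj (LinearMap.range f) f :=
    ⟨fun x => LinearMap.mem_range_self f x, by
      rintro x ⟨y, rfl⟩; exact hff y⟩
  have h1 : LinearMap.trace ℝ (Fin N → ℝ) f = (Module.finrank ℝ (LinearMap.range f) : ℝ) :=
    hproj.trace
  have h2 : LinearMap.trace ℝ (Fin N → ℝ) f = P.trace := by
    rw [LinearMap.trace_eq_matrix_trace ℝ (Pi.basisFun ℝ (Fin N)) f,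
      LinearMap.toMatrix_eq_toMatrix']
    have : f = Matrix.toLin' P := (Matrix.toLin'_apply' P).symm
    rw [this, LinearMap.toMatrix'_toLin']
  rw [← h2, h1]
  rfl

theorem stmt_6 (K₁ L : ℕ) (m : ℝ) (hm : 0 < m)
    (P : (N : ℕ) → Matrix (Fin N) (Fin N) ℝ)
    (hsymm : ∀ N, (P N)ᵀ = P N) (hidem : ∀ N, P N * P N = P N)
    (hrank : ∀ N, (P N).rank ≤ K₁)
    (hlev : ∀ N i, (P N) i i ≤ 1 - m) :
    Tendsto (fun N : ℕ =>
        (∑ i : Fin N, ((L + 1 : ℝ) / N) / (1 - (P N) i i + (L + 1 : ℝ) / N)) - (L + 1 : ℝ))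
      atTop (nhds 0) := by
  set C : ℝ := (L + 1) * (K₁ + (L + 1)) / m with hC
  have hC0 : 0 ≤ C := by positivity
  refine squeeze_zero_norm' (a := fun N : ℕ => C / N) ?_ ?_
  · filter_upwards [eventually_ge_atTop 1] with N hN
    have hN0 : (0 : ℝ) < N := by exact_mod_cast hN
    set ω : ℝ := (L + 1 : ℝ) / N with hω
    have hω0 : 0 < ω := by positivity
    have hNω : (N : ℝ) * ω = (L + 1 : ℝ) := by
      rw [hω]; field_simp
    -- diagonal entries nonneg
    have hdiag : ∀ i, 0 ≤ (P N) i i := by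
      intro i
      have h := congrFun (congrFun (hidem N) i) i
      rw [Matrix.mul_apply] at h
      have hsy : ∀ j, (P N) i j = (P N) j i := fun j =>
        (congrFun (congrFun (hsymm N) j) i).symm ▸ rfl
      calc (0:ℝ) ≤ ∑ j, (P N) i j * (P N) i j :=
              Finset.sum_nonneg fun j _ => mul_self_nonneg _
        _ = ∑ j, (P N) i j * (P N) j i := by
              refine Finset.sum_congr rfl fun j _ => ?_
              have := congrFun (congrFun (hsymm N) i) j
              simp only [Matrix.transpose_apply] at this
              rw [this]
        _ = (P N) i i := h
    have htr : ∑ i, (P N) i i ≤ (K₁ : ℝ) := by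
      have := trace_eq_rank_aux (P N) (hidem N)
      have hle : ((P N).rank : ℝ) ≤ (K₁ : ℝ) := by exact_mod_cast hrank N
      calc ∑ i, (P N) i i = (P N).trace := rfl
        _ = ((P N).rank : ℝ) := this
        _ ≤ K₁ := hle
    -- termwise bound
    have hterm : ∀ i, |ω / (1 - (P N) i i + ω) - ω| ≤ (ω / m) * ((P N) i i + ω) := by
      intro i
      have hden : m ≤ 1 - (P N) i i + ω := by
        have := hlev N i; linarith
      have hden0 : 0 < 1 - (P N) i i + ω := lt_of_lt_of_le hm hden
      have key : ω / (1 - (P N) i i + ω) - ω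
          = ω * ((P N) i i - ω) / (1 - (P N) i i + ω) := by
        field_simp
        ring
      rw [key, abs_div, abs_of_pos hden0, abs_mul, abs_of_pos hω0]
      rw [div_le_iff₀ hden0]
      have h1 : |(P N) i i - ω| ≤ (P N) i i + ω := by
        rw [abs_le]; constructor <;> [linarith [hdiag i, hω0.le]; linarith [hdiag i, hω0.le]]
      have h2 : (ω / m) * ((P N) i i + ω) * m ≤ (ω / m) * ((P N) i i + ω) * (1 - (P N) i i + ω) := by
        apply mul_le_mul_of_nonneg_left hden
        have := hdiag i
        have := hω0.le
        positivity
      calc ω * |(P N) i i - ω| ≤ ω * ((P N) i i + ω) :=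
            mul_le_mul_of_nonneg_left h1 hω0.le
        _ = (ω / m) * ((P N) i i + ω) * m := by field_simp
        _ ≤ _ := h2
    -- sum bound
    have hsum : |(∑ i : Fin N, ω / (1 - (P N) i i + ω)) - (L + 1 : ℝ)| ≤ C / N := by
      have hrew : (∑ i : Fin N, ω / (1 - (P N) i i + ω)) - (L + 1 : ℝ)
          = ∑ i : Fin N, (ω / (1 - (P N) i i + ω) - ω) := by
        rw [Finset.sum_sub_distrib, Finset.sum_const, Finset.card_univ, Fintype.card_fin,
          nsmul_eq_mul, hNω]
      rw [hrew]
      calc |∑ i : Fin N, (ω / (1 - (P N) i i + ω) - ω)|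
          ≤ ∑ i : Fin N, |ω / (1 - (P N) i i + ω) - ω| := Finset.abs_sum_le_sum_abs _ _
        _ ≤ ∑ i : Fin N, (ω / m) * ((P N) i i + ω) :=
            Finset.sum_le_sum fun i _ => hterm i
        _ = (ω / m) * ((∑ i, (P N) i i) + N * ω) := by
            rw [← Finset.mul_sum, Finset.sum_add_distrib, Finset.sum_const,
              Finset.card_univ, Fintype.card_fin, nsmul_eq_mul]
        _ ≤ (ω / m) * ((K₁ : ℝ) + (L + 1)) := by
            apply mul_le_mul_of_nonneg_left _ (by positivity)
            rw [hNω]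
            exact add_le_add_left htr _
        _ = C / N := by
            rw [hC, hω]; field_simp
    simpa using hsum
  · simpa using tendsto_const_div_atTop_nhds_zero_nat C
end

section
/- Under the leverage bound D_i ≤ 1 − m and ω = (L+1)/N, the absolute value of Σ_{i=1}^N ω/(1 − D_i + ω) − (L+1) is at most K₁(L+1)/(mN + L+1) + (L+1)²/(mN + L+1), where K₁ = Σ_i D_i. -/
theorem stmt_7 {N : ℕ} (hN : 0 < N) (L : ℕ) (m : ℝ) (hm : 0 < m)
    (D : Fin N → ℝ) (hD0 : ∀ i, 0 ≤ D i) (hD1 : ∀ i, D i ≤ 1 - m) :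
    |(∑ i, ((L + 1 : ℝ) / N) / (1 - D i + (L + 1 : ℝ) / N)) - (L + 1 : ℝ)| ≤
      (∑ i, D i) * (L + 1) / (m * N + (L + 1)) + (L + 1) ^ 2 / (m * N + (L + 1)) := by
  have hn : (0:ℝ) < N := by exact_mod_cast hN
  set ω : ℝ := (L + 1 : ℝ) / N with hω
  have hωpos : 0 < ω := by positivity
  have hdpos : (0:ℝ) < m + ω := by positivity
  have hden : ∀ i, m + ω ≤ 1 - D i + ω := fun i => by have := hD1 i; linarith
  have hdenpos : ∀ i, (0:ℝ) < 1 - D i + ω := fun i => lt_of_lt_of_le hdpos (hden i)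
  have hsum : (L + 1 : ℝ) = ∑ _i : Fin N, ω := by
    rw [Finset.sum_const, Finset.card_univ, Fintype.card_fin, hω, nsmul_eq_mul]
    field_simp
  have key : ∀ i, |ω / (1 - D i + ω) - ω| ≤ ω * (D i + ω) / (m + ω) := by
    intro i
    have h1 : ω / (1 - D i + ω) - ω = ω * (D i - ω) / (1 - D i + ω) := by
      field_simp [ne_of_gt (hdenpos i)]
      ring
    rw [h1, abs_div, abs_of_pos (hdenpos i), abs_mul, abs_of_pos hωpos]
    apply div_le_div₀ (by nlinarith [hD0 i, hωpos.le]) _ hdpos (hden i)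
    have : |D i - ω| ≤ D i + ω := by
      rw [abs_le]; constructor <;> [linarith [hD0 i]; linarith [hωpos.le]]
    nlinarith [hωpos.le]
  calc |(∑ i, ω / (1 - D i + ω)) - (L + 1 : ℝ)|
      = |∑ i, (ω / (1 - D i + ω) - ω)| := by rw [hsum, Finset.sum_sub_distrib]
    _ ≤ ∑ i, |ω / (1 - D i + ω) - ω| := Finset.abs_sum_le_sum_abs _ _
    _ ≤ ∑ i, ω * (D i + ω) / (m + ω) := Finset.sum_le_sum fun i _ => key i
    _ = (∑ i, D i) * (L + 1) / (m * N + (L + 1)) + (L + 1) ^ 2 / (m * N + (L + 1)) := by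
        rw [← Finset.sum_div]
        have h2 : ∑ i, ω * (D i + ω) = ω * (∑ i, D i) + ω * (N * ω) := by
          simp only [mul_add, Finset.sum_add_distrib, ← Finset.mul_sum, Finset.sum_const,
            Finset.card_univ, Fintype.card_fin, nsmul_eq_mul]
        rw [h2, hω]
        have hmn : m * N + (L + 1 : ℝ) > 0 := by positivity
        field_simp
end
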